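/- arXiv:2301.01735 — 5 statements merged into one kernel-verified Lean document; each statement's English description precedes it below -/
import Mathlib

section
/- Let π: X → Y be a quotient map from a bounded metric space X onto a topological space Y, let L ≥ 1, L₁ > 0 and α, β ∈ (0,1). Assume that for every x ∈ X there is an intrinsically (L,α)-Hölder section ψ_x: Y → X of π with x ∈ ψ_x(Y). If φ: Y → X is a section of π such that for every x ∈ φ(Y) the section φ is intrinsically (L₁,β)-Hölder with respect to ψ_x at the point x, then there exist L₂ > 0 and γ ∈ (0,1) such that φ is an intrinsically (L₂,γ)-Hölder section. -/
open Metric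

/-- Proposition 2.5, second direction: if every point of `X` lies on an intrinsically
`(L,α)`-Hölder section `ψ_x`, and the section `φ` is intrinsically `(L₁,β)`-Hölder with
respect to `ψ_x` at `x` for every `x ∈ φ(Y)`, then `φ` is an intrinsically `(L₂,γ)`-Hölder
section for some `L₂ > 0` and `γ ∈ (0,1)`. -/
theorem holder_of_holder_wrt {X Y : Type*} [MetricSpace X] [TopologicalSpace Y]
    (π : X → Y) (hcont : Continuous π) (hopen : IsOpenMap π)
    (hsurj : Function.Surjective π)
    (hbdd : Bornology.IsBounded (Set.univ : Set X))
    (L : ℝ) (hL : 1 ≤ L) (L₁ : ℝ) (hL₁ : 0 < L₁)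
    (α β : ℝ) (hα : α ∈ Set.Ioo (0 : ℝ) 1) (hβ : β ∈ Set.Ioo (0 : ℝ) 1)
    (ψ : X → Y → X)
    (hψsec : ∀ x y, π (ψ x y) = y)
    (hψmem : ∀ x : X, x ∈ Set.range (ψ x))
    (hψholder : ∀ x : X, ∀ y₁ y₂ : Y,
      dist (ψ x y₁) (ψ x y₂) ≤ L * infDist (ψ x y₁) (π ⁻¹' {y₂}) ^ α
        + infDist (ψ x y₁) (π ⁻¹' {y₂}))
    (φ : Y → X) (hφsec : ∀ y, π (φ y) = y)
    (hwrt : ∀ x ∈ Set.range φ,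
      ∃ yh : Y, x = φ yh ∧ x = ψ x yh ∧
        ∀ y : Y, dist (φ y) (ψ x y) ≤ L₁ * dist (ψ x yh) (ψ x y) ^ β
          + dist (ψ x yh) (ψ x y)) :
    ∃ L₂ > (0 : ℝ), ∃ γ ∈ Set.Ioo (0 : ℝ) 1, ∀ y₁ y₂ : Y,
      dist (φ y₁) (φ y₂) ≤ L₂ * infDist (φ y₁) (π ⁻¹' {y₂}) ^ γ
        + infDist (φ y₁) (π ⁻¹' {y₂}) := by
  obtain ⟨hα0, hα1⟩ := hα
  obtain ⟨hβ0, hβ1⟩ := hβ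
  set M : ℝ := diam (Set.univ : Set X) + 1 with hM
  have hM1 : (1:ℝ) ≤ M := by
    have := Metric.diam_nonneg (s := (Set.univ : Set X)); simp only [hM]; linarith
  have hM0 : (0:ℝ) < M := by linarith
  set C₁ : ℝ := L + M ^ (1 - α) with hC₁
  have hC₁0 : (0:ℝ) < C₁ := by
    have h := Real.rpow_nonneg hM0.le (1 - α)
    simp only [hC₁]; linarith
  refine ⟨2 * C₁ * M ^ (α * (1 - β)) + L₁ * C₁ ^ β, ?_, α * β,
    ⟨mul_pos hα0 hβ0, ?_⟩, ?_⟩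
  · have h1 : 0 < L₁ * C₁ ^ β := mul_pos hL₁ (Real.rpow_pos_of_pos hC₁0 β)
    have h2 : (0:ℝ) ≤ 2 * C₁ * M ^ (α * (1 - β)) := by positivity
    linarith
  · calc α * β ≤ α * 1 := by nlinarith
      _ < 1 := by linarith
  · intro y₁ y₂
    obtain ⟨yh, hxφ, hxψ, hbound⟩ := hwrt (φ y₁) ⟨y₁, rfl⟩
    have hyh : yh = y₁ := by
      have h2 : π (ψ (φ y₁) yh) = yh := hψsec _ yh
      rw [← hxψ, hφsec] at h2
      exact h2.symm
    rw [hyh] at hxψ hbound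
    have hψx : ψ (φ y₁) y₁ = φ y₁ := hxψ.symm
    set D := infDist (φ y₁) (π ⁻¹' {y₂}) with hD
    have hD0 : (0:ℝ) ≤ D := infDist_nonneg
    have hDM : D ≤ M := by
      obtain ⟨z, hz⟩ := hsurj y₂
      have h1 : D ≤ dist (φ y₁) z := infDist_le_dist_of_mem (by simp [hz])
      have h2 : dist (φ y₁) z ≤ diam (Set.univ : Set X) :=
        dist_le_diam_of_mem hbdd trivial trivial
      simp only [hM]; linarith
    set A := dist (φ y₁) (ψ (φ y₁) y₂) with hA
    have hA0 : (0:ℝ) ≤ A := dist_nonneg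
    have hA1 : A ≤ L * D ^ α + D := by
      have h := hψholder (φ y₁) y₁ y₂
      rwa [hψx] at h
    have hA2 : A ≤ C₁ * D ^ α := by
      have he : (1 - α) + α = 1 := by ring
      have hD1 : D ^ (1 - α) * D ^ α = D := by
        rw [← Real.rpow_add' hD0 (by rw [he]; norm_num)]
        rw [he, Real.rpow_one]
      have h1 : D ^ (1 - α) ≤ M ^ (1 - α) :=
        Real.rpow_le_rpow hD0 hDM (by linarith)
      have h2 : (0:ℝ) ≤ D ^ α := Real.rpow_nonneg hD0 _
      have h3 : D ≤ M ^ (1 - α) * D ^ α := by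
        calc D = D ^ (1 - α) * D ^ α := hD1.symm
          _ ≤ M ^ (1 - α) * D ^ α := mul_le_mul_of_nonneg_right h1 h2
      simp only [hC₁]; nlinarith
    have hB : dist (φ y₂) (ψ (φ y₁) y₂) ≤ L₁ * A ^ β + A := by
      have h := hbound y₂
      rwa [← hxψ] at h
    have htri : dist (φ y₁) (φ y₂) ≤ 2 * A + L₁ * A ^ β := by
      have h1 : dist (φ y₁) (φ y₂) ≤ A + dist (φ y₂) (ψ (φ y₁) y₂) := by
        rw [hA, dist_comm (φ y₂)]
        exact dist_triangle _ _ _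
      linarith
    have hDab0 : (0:ℝ) ≤ D ^ (α * β) := Real.rpow_nonneg hD0 _
    have hAβ : A ^ β ≤ C₁ ^ β * D ^ (α * β) := by
      have h1 : A ^ β ≤ (C₁ * D ^ α) ^ β :=
        Real.rpow_le_rpow hA0 hA2 hβ0.le
      rwa [Real.mul_rpow hC₁0.le (Real.rpow_nonneg hD0 _),
        ← Real.rpow_mul hD0] at h1
    have hA3 : A ≤ C₁ * M ^ (α * (1 - β)) * D ^ (α * β) := by
      have he : α * (1 - β) + α * β = α := by ring
      have hD1 : D ^ (α * (1 - β)) * D ^ (α * β) = D ^ α := by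
        rw [← Real.rpow_add' hD0 (by rw [he]; exact hα0.ne')]
        rw [he]
      have h1 : D ^ (α * (1 - β)) ≤ M ^ (α * (1 - β)) :=
        Real.rpow_le_rpow hD0 hDM (by nlinarith)
      have h2 : C₁ * (D ^ (α * (1 - β)) * D ^ (α * β)) ≤
          C₁ * (M ^ (α * (1 - β)) * D ^ (α * β)) := by
        apply mul_le_mul_of_nonneg_left _ hC₁0.le
        exact mul_le_mul_of_nonneg_right h1 hDab0
      rw [hD1] at h2
      calc A ≤ C₁ * D ^ α := hA2
        _ ≤ C₁ * (M ^ (α * (1 - β)) * D ^ (α * β)) := h2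
        _ = C₁ * M ^ (α * (1 - β)) * D ^ (α * β) := by ring
    have hfin : dist (φ y₁) (φ y₂) ≤
        (2 * C₁ * M ^ (α * (1 - β)) + L₁ * C₁ ^ β) * D ^ (α * β) := by
      have h1 : L₁ * A ^ β ≤ L₁ * (C₁ ^ β * D ^ (α * β)) :=
        mul_le_mul_of_nonneg_left hAβ hL₁.le
      nlinarith
    linarith
end

section
/- Let X be a real normed space, Y a real normed space, π: X → Y a surjective linear map, ψ: Y → X a section of π, ŷ ∈ Y, x̂ = ψ(ŷ), and α ∈ (0,1]. Suppose λ₁, λ₂ > 0 and φ₁, φ₂: Y → X satisfy, for i = 1, 2: π(φᵢ(y)) = λᵢ·y for all y ∈ Y, and there is L̃ᵢ > 0 with ‖φᵢ(y) − λᵢψ(y)‖ ≤ L̃ᵢ·‖λᵢψ(ŷ) − λᵢψ(y)‖^α + ‖λᵢψ(ŷ) − λᵢψ(y)‖ for all y ∈ Y. Then the sum φ₁ + φ₂ satisfies π((φ₁+φ₂)(y)) = (λ₁+λ₂)·y for all y ∈ Y, and there is L̃ > 0 with ‖(φ₁+φ₂)(y) − (λ₁+λ₂)ψ(y)‖ ≤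 L̃·‖(λ₁+λ₂)ψ(ŷ) − (λ₁+λ₂)ψ(y)‖^α + ‖(λ₁+λ₂)ψ(ŷ) − (λ₁+λ₂)ψ(y)‖ for all y ∈ Y. -/
/-!
Write `d = ‖ψ ŷ - ψ y‖`, so that `‖λψ ŷ - λψ y‖ = λ d`. The deviation of `φ₁ + φ₂` from
`(λ₁ + λ₂)ψ` is the sum of the deviations of `φᵢ` from `λᵢψ`, hence at most
`L₁ (λ₁d)^α + λ₁d + L₂ (λ₂d)^α + λ₂d`; since `t ↦ t^α` is monotone, this is at most
`(L₁ + L₂) ((λ₁ + λ₂)d)^α + (λ₁ + λ₂)d`.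
-/

/-- `IntrinsicHolderWith L α s ŷ φ` says `φ ∈ H_{s, s ŷ, α}` with constant `L`. -/
def IntrinsicHolderWith {X Y : Type*} [NormedAddCommGroup X] (L α : ℝ) (s : Y → X) (yh : Y)
    (φ : Y → X) : Prop :=
  ∀ y, ‖φ y - s y‖ ≤ L * ‖s yh - s y‖ ^ α + ‖s yh - s y‖

lemma mul_rpow_add_self_add_le {L₁ L₂ α a b : ℝ} (hL₁ : 0 ≤ L₁) (hL₂ : 0 ≤ L₂)
    (hα : 0 ≤ α) (ha : 0 ≤ a) (hb : 0 ≤ b) :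
    (L₁ * a ^ α + a) + (L₂ * b ^ α + b) ≤ (L₁ + L₂) * (a + b) ^ α + (a + b) := by
  have ha' : a ^ α ≤ (a + b) ^ α := Real.rpow_le_rpow ha (by linarith) hα
  have hb' : b ^ α ≤ (a + b) ^ α := Real.rpow_le_rpow hb (by linarith) hα
  nlinarith [mul_le_mul_of_nonneg_left ha' hL₁, mul_le_mul_of_nonneg_left hb' hL₂]

lemma norm_smul_sub_smul_of_nonneg {E : Type*} [SeminormedAddCommGroup E] [NormedSpace ℝ E]
    {c : ℝ} (hc : 0 ≤ c) (a b : E) : ‖c • a - c • b‖ = c * ‖a - b‖ := by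
  rw [← smul_sub, norm_smul, Real.norm_of_nonneg hc]

lemma IntrinsicHolderWith.add_smul {X Y : Type*} [NormedAddCommGroup X] [NormedSpace ℝ X]
    {ψ φ₁ φ₂ : Y → X} {yh : Y} {α L₁ L₂ lam₁ lam₂ : ℝ} (hα : 0 ≤ α)
    (hL₁ : 0 ≤ L₁) (hL₂ : 0 ≤ L₂) (hlam₁ : 0 ≤ lam₁) (hlam₂ : 0 ≤ lam₂)
    (h₁ : IntrinsicHolderWith L₁ α (lam₁ • ψ) yh φ₁)
    (h₂ : IntrinsicHolderWith L₂ α (lam₂ • ψ) yh φ₂) :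
    IntrinsicHolderWith (L₁ + L₂) α ((lam₁ + lam₂) • ψ) yh (φ₁ + φ₂) := by
  intro y
  have h₁y := h₁ y
  have h₂y := h₂ y
  simp only [Pi.smul_apply, Pi.add_apply] at h₁y h₂y ⊢
  rw [norm_smul_sub_smul_of_nonneg hlam₁] at h₁y
  rw [norm_smul_sub_smul_of_nonneg hlam₂] at h₂y
  rw [norm_smul_sub_smul_of_nonneg (add_nonneg hlam₁ hlam₂), add_mul lam₁ lam₂]
  set d := ‖ψ yh - ψ y‖
  have hd : 0 ≤ d := norm_nonneg _
  calc ‖φ₁ y + φ₂ y - (lam₁ + lam₂) • ψ y‖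
      = ‖(φ₁ y - lam₁ • ψ y) + (φ₂ y - lam₂ • ψ y)‖ := by rw [_root_.add_smul, add_sub_add_comm]
    _ ≤ ‖φ₁ y - lam₁ • ψ y‖ + ‖φ₂ y - lam₂ • ψ y‖ := norm_add_le _ _
    _ ≤ (L₁ * (lam₁ * d) ^ α + lam₁ * d) + (L₂ * (lam₂ * d) ^ α + lam₂ * d) := add_le_add h₁y h₂y
    _ ≤ _ := mul_rpow_add_self_add_le hL₁ hL₂ hα
        (mul_nonneg hlam₁ hd) (mul_nonneg hlam₂ hd)

theorem holder_set_add_general {X Y : Type*} [NormedAddCommGroup X] [NormedSpace ℝ X]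
    [NormedAddCommGroup Y] [NormedSpace ℝ Y]
    (π : X →ₗ[ℝ] Y)
    (ψ : Y → X)
    (yh : Y)
    (α : ℝ) (hα : α ∈ Set.Ioc (0 : ℝ) 1)
    (lam₁ lam₂ : ℝ) (hlam₁ : 0 < lam₁) (hlam₂ : 0 < lam₂)
    (φ₁ φ₂ : Y → X)
    (hφ₁sec : ∀ y, π (φ₁ y) = lam₁ • y)
    (hφ₂sec : ∀ y, π (φ₂ y) = lam₂ • y)
    (hφ₁ : ∃ L > (0 : ℝ), ∀ y : Y,
      ‖φ₁ y - lam₁ • ψ y‖ ≤ L * ‖lam₁ • ψ yh - lam₁ • ψ y‖ ^ α + ‖lam₁ • ψ yh - lam₁ • ψ y‖)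
    (hφ₂ : ∃ L > (0 : ℝ), ∀ y : Y,
      ‖φ₂ y - lam₂ • ψ y‖ ≤ L * ‖lam₂ • ψ yh - lam₂ • ψ y‖ ^ α + ‖lam₂ • ψ yh - lam₂ • ψ y‖) :
    (∀ y : Y, π (φ₁ y + φ₂ y) = (lam₁ + lam₂) • y) ∧
    ∃ L > (0 : ℝ), ∀ y : Y,
      ‖(φ₁ y + φ₂ y) - (lam₁ + lam₂) • ψ y‖ ≤
        L * ‖(lam₁ + lam₂) • ψ yh - (lam₁ + lam₂) • ψ y‖ ^ α
          + ‖(lam₁ + lam₂) • ψ yh - (lam₁ + lam₂) • ψ y‖ := by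
  obtain ⟨L₁, hL₁, h₁⟩ := hφ₁
  obtain ⟨L₂, hL₂, h₂⟩ := hφ₂
  refine ⟨fun y => by rw [map_add, hφ₁sec, hφ₂sec, add_smul], L₁ + L₂, add_pos hL₁ hL₂, ?_⟩
  exact IntrinsicHolderWith.add_smul hα.1.le hL₁.le hL₂.le hlam₁.le hlam₂.le h₁ h₂

/-- Theorem 2.8 (closure under addition): if `φ₁ ∈ H_{λ₁ψ, λ₁x̂, α}` and
`φ₂ ∈ H_{λ₂ψ, λ₂x̂, α}`, then `φ₁ + φ₂ ∈ H_{(λ₁+λ₂)ψ, (λ₁+λ₂)x̂, α}`. -/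
theorem holder_set_add {X Y : Type*} [NormedAddCommGroup X] [NormedSpace ℝ X]
    [NormedAddCommGroup Y] [NormedSpace ℝ Y]
    (π : X →ₗ[ℝ] Y) (hsurj : Function.Surjective π)
    (ψ : Y → X) (hψ : ∀ y, π (ψ y) = y)
    (yh : Y) (xh : X) (hxh : xh = ψ yh)
    (α : ℝ) (hα : α ∈ Set.Ioc (0 : ℝ) 1)
    (lam₁ lam₂ : ℝ) (hlam₁ : 0 < lam₁) (hlam₂ : 0 < lam₂)
    (φ₁ φ₂ : Y → X)
    (hφ₁sec : ∀ y, π (φ₁ y) = lam₁ • y)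
    (hφ₂sec : ∀ y, π (φ₂ y) = lam₂ • y)
    (hφ₁ : ∃ L > (0 : ℝ), ∀ y : Y,
      ‖φ₁ y - lam₁ • ψ y‖ ≤ L * ‖lam₁ • ψ yh - lam₁ • ψ y‖ ^ α + ‖lam₁ • ψ yh - lam₁ • ψ y‖)
    (hφ₂ : ∃ L > (0 : ℝ), ∀ y : Y,
      ‖φ₂ y - lam₂ • ψ y‖ ≤ L * ‖lam₂ • ψ yh - lam₂ • ψ y‖ ^ α + ‖lam₂ • ψ yh - lam₂ • ψ y‖) :
    (∀ y : Y, π (φ₁ y + φ₂ y) = (lam₁ + lam₂) • y) ∧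
    ∃ L > (0 : ℝ), ∀ y : Y,
      ‖(φ₁ y + φ₂ y) - (lam₁ + lam₂) • ψ y‖ ≤
        L * ‖(lam₁ + lam₂) • ψ yh - (lam₁ + lam₂) • ψ y‖ ^ α
          + ‖(lam₁ + lam₂) • ψ yh - (lam₁ + lam₂) • ψ y‖ :=
  holder_set_add_general π ψ yh α hα lam₁ lam₂ hlam₁ hlam₂ φ₁ φ₂ hφ₁sec hφ₂sec hφ₁ hφ₂
end

section
/- There exist a metric space X, a topological space Y, a quotient map π: X → Y, a continuous section f: Y → X of π, and points x, y, z ∈ Y such that dist(f(x), π⁻¹(y)) − dist(f(x), π⁻¹(z)) > d(f(y), f(z)). (One may take X ⊂ ℝ² to be the union of the three segments joining (0,8) to (8,8), (1,4) to (8,6), and (0,3) to (8,7), with the Euclidean distance, Y the segment from (0,0) to (8,0), π the projection onto the first coordinate, and a continuous section f with f((1,0)) = (1,4), f((7,0)) = (8,7), f((6,0)) = (8,6); then dist(f(x), π⁻¹(y)) − dist(f(x), π⁻¹(z)) = √(5/4) > 1 = d(f(y), f(z)).) -/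
open Metric

/-!
Discrete spaces make continuity and openness automatic, so a configuration of a few natural
numbers suffices.
Take `X = ℕ` with `dist m n = |m - n|`, `Y = Fin 3`, and `π` with fibers `{3}` over `1`,
`{1, 4}` over `2` and everything else over `0`; the section sends `0, 1, 2` to `0, 3, 4`.
Seen from `f 0 = 0`, the fiber over `1` is at distance `3`, while the fiber over `2` is at
distance `1` through the point `1 ≠ f 2`; yet `f 1` and `f 2` are adjacent, and `3 - 1 > 1`.
-/

namespace AsymmetricFiberDistance

def collapse : ℕ → Fin 3
  | 3 => 1
  | 1 | 4 => 2
  | _ => 0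

def lift : Fin 3 → ℕ := ![0, 3, 4]

theorem collapse_lift (w : Fin 3) : collapse (lift w) = w := by
  fin_cases w <;> rfl

theorem collapse_surjective : Function.Surjective collapse :=
  Function.LeftInverse.surjective collapse_lift

theorem collapse_preimage_one : collapse ⁻¹' {1} = {3} := by
  ext n
  rcases n with _ | _ | _ | _ | _ | n <;> simp [collapse]

theorem infDist_lift_zero_fiber_one : infDist (lift 0) (collapse ⁻¹' {1}) = 3 := by
  rw [collapse_preimage_one, infDist_singleton]
  show dist 0 3 = 3
  norm_num [Nat.dist_eq]

theorem infDist_lift_zero_fiber_two_le : infDist (lift 0) (collapse ⁻¹' {2}) ≤ 1 :=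
  calc infDist (lift 0) (collapse ⁻¹' {2})
      ≤ dist 0 1 := infDist_le_dist_of_mem (show collapse 1 = 2 from rfl)
    _ = 1 := by norm_num [Nat.dist_eq]

theorem dist_lift_one_two : dist (lift 1) (lift 2) = 1 := by
  show dist 3 4 = 1
  norm_num [Nat.dist_eq]

theorem dist_lift_lt_infDist_sub_infDist :
    dist (lift 1) (lift 2) <
      infDist (lift 0) (collapse ⁻¹' {1}) - infDist (lift 0) (collapse ⁻¹' {2}) := by
  rw [dist_lift_one_two, infDist_lift_zero_fiber_one]
  linarith [infDist_lift_zero_fiber_two_le]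

end AsymmetricFiberDistance

/-- There exist a metric space `X`, a topological space `Y`, a quotient map `π : X → Y`,
a continuous section `f` of `π` and points `x, y, z ∈ Y` with
`dist(f(x), π⁻¹(y)) - dist(f(x), π⁻¹(z)) > d(f(y), f(z))`: the roles of the point and the
fiber in the intrinsic distance cannot be exchanged. -/
theorem exists_asymmetric_fiber_distance :
    ∃ (X : Type) (_ : MetricSpace X) (Y : Type) (_ : TopologicalSpace Y)
      (π : X → Y) (f : Y → X) (x y z : Y),
      Continuous π ∧ IsOpenMap π ∧ Function.Surjective π ∧
      (∀ w : Y, π (f w) = w) ∧ Continuous f ∧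
      dist (f y) (f z) < infDist (f x) (π ⁻¹' {y}) - infDist (f x) (π ⁻¹' {z}) := by
  exact ⟨ℕ, inferInstance, Fin 3, inferInstance, AsymmetricFiberDistance.collapse,
    AsymmetricFiberDistance.lift, 0, 1, 2, continuous_of_discreteTopology,
    fun _ _ => isOpen_discrete _, AsymmetricFiberDistance.collapse_surjective,
    AsymmetricFiberDistance.collapse_lift, continuous_of_discreteTopology,
    AsymmetricFiberDistance.dist_lift_lt_infDist_sub_infDist⟩
end

section
/- Let (F, d) be a metric space, k ≥ 1, and h: F → ℝ a map satisfying (1/k)·d(x, x') ≤ |h(x) − h(x')| ≤ k·d(x, x') for all x, x' ∈ F. Let c ≥ 0 and α > 0, and define g: ℝ → ℝ by g(t) = 2(t − αc) if |t| ≤ 2αc, g(t) = t if t > 2αc, and g(t) = 3t if t < −2αc. Then the composition f = g ∘ h satisfies (1/k)·d(x, x') ≤ |f(x) − f(x')| ≤ 3k·d(x, x') for all x, x' ∈ F; in particular f is biLipschitz. -/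
lemma piecewise_key (c α : ℝ) (hc : 0 ≤ c) (hα : 0 < α)
    (g : ℝ → ℝ)
    (hg1 : ∀ t : ℝ, |t| ≤ 2 * α * c → g t = 2 * (t - α * c))
    (hg2 : ∀ t : ℝ, 2 * α * c < t → g t = t)
    (hg3 : ∀ t : ℝ, t < -(2 * α * c) → g t = 3 * t) :
    ∀ s t : ℝ, s ≤ t → t - s ≤ g t - g s ∧ g t - g s ≤ 3 * (t - s) := by
  intro s t hst
  have hac : 0 ≤ α * c := mul_nonneg hα.le hc
  rcases lt_or_ge s (-(2*α*c)) with hs | hs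
  · rcases lt_or_ge t (-(2*α*c)) with ht | ht
    · rw [hg3 s hs, hg3 t ht]; constructor <;> nlinarith
    · rcases le_or_gt t (2*α*c) with ht2 | ht2
      · have habs : |t| ≤ 2*α*c := by rw [abs_le]; constructor <;> linarith
        rw [hg3 s hs, hg1 t habs]; constructor <;> nlinarith
      · rw [hg3 s hs, hg2 t ht2]; constructor <;> nlinarith
  · rcases le_or_gt s (2*α*c) with hs2 | hs2
    · have hsabs : |s| ≤ 2*α*c := by rw [abs_le]; constructor <;> linarith
      rcases le_or_gt t (2*α*c) with ht2 | ht2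
      · have habs : |t| ≤ 2*α*c := by rw [abs_le]; constructor <;> linarith
        rw [hg1 s hsabs, hg1 t habs]; constructor <;> nlinarith
      · rw [hg1 s hsabs, hg2 t ht2]; constructor <;> nlinarith
    · have ht2 : 2*α*c < t := lt_of_lt_of_le hs2 hst
      rw [hg2 s hs2, hg2 t ht2]; constructor <;> nlinarith

/-- BiLipschitz property on fibers of the map `f_{x₀}` from the extension theorem: if
`h` is `k`-biLipschitz into `ℝ` and `g` is the piecewise profile with slopes `2, 1, 3`,
then `g ∘ h` satisfies `(1/k)·d(x,x') ≤ |g(h(x)) - g(h(x'))| ≤ 3k·d(x,x')`. -/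
theorem piecewise_comp_biLipschitz {F : Type*} [MetricSpace F]
    (k : ℝ) (hk : 1 ≤ k) (h : F → ℝ)
    (hbil : ∀ x x' : F,
      (1 / k) * dist x x' ≤ |h x - h x'| ∧ |h x - h x'| ≤ k * dist x x')
    (c α : ℝ) (hc : 0 ≤ c) (hα : 0 < α)
    (g : ℝ → ℝ)
    (hg1 : ∀ t : ℝ, |t| ≤ 2 * α * c → g t = 2 * (t - α * c))
    (hg2 : ∀ t : ℝ, 2 * α * c < t → g t = t)
    (hg3 : ∀ t : ℝ, t < -(2 * α * c) → g t = 3 * t) :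
    ∀ x x' : F,
      (1 / k) * dist x x' ≤ |g (h x) - g (h x')| ∧
        |g (h x) - g (h x')| ≤ 3 * k * dist x x' := by
  have key : ∀ s t : ℝ, |s - t| ≤ |g s - g t| ∧ |g s - g t| ≤ 3 * |s - t| := by
    intro s t
    rcases le_total s t with hst | hst
    · obtain ⟨h1, h2⟩ := piecewise_key c α hc hα g hg1 hg2 hg3 s t hst
      rw [abs_sub_comm s t, abs_sub_comm (g s) (g t),
        abs_of_nonneg (by linarith), abs_of_nonneg (by linarith)]
      exact ⟨h1, h2⟩
    · obtain ⟨h1, h2⟩ := piecewise_key c α hc hα g hg1 hg2 hg3 t s hst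
      rw [abs_of_nonneg (by linarith), abs_of_nonneg (by linarith)]
      exact ⟨h1, h2⟩
  intro x x'
  obtain ⟨hb1, hb2⟩ := hbil x x'
  obtain ⟨hk1, hk2⟩ := key (h x) (h x')
  constructor
  · linarith
  · nlinarith [dist_nonneg (x := x) (y := x')]
end

section
/- Let π: X → Y be a quotient map from a metric space X onto a topological space Y, let k ≥ 1 and L ≥ 1, let τ: X → ℝ be k-Lipschitz, and let ρ: X × X → ℝ satisfy d(x, x') ≤ k·ρ(x, x') for all x, x' ∈ X. Let Y' ⊆ Y and let φ: Y' → π⁻¹(Y') be an intrinsically L-Lipschitz section of the restriction of π. Let x₀, x̄₀ ∈ φ(Y'), set τ₀ = τ(x₀), and let φ_{τ₀}: Y → X be a section of π whose image is contained in τ⁻¹(τ₀). Then |τ(x̄₀) − τ(x₀)| ≤ L·k²·ρ(x₀, φ_{τ₀}(π(x̄₀))). -/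
open Metric

/-- The key estimate in the proof of the extension theorem: for points `x₀, x̄₀` on a
partially defined intrinsically `L`-Lipschitz graph, with `φ_{τ₀}` a section of `π` whose
image lies in the level set `τ⁻¹(τ(x₀))`, one has
`|τ(x̄₀) - τ(x₀)| ≤ L·k²·ρ(x₀, φ_{τ₀}(π(x̄₀)))`. -/
theorem level_set_key_estimate {X Y : Type*} [MetricSpace X] [TopologicalSpace Y]
    (π : X → Y) (hcont : Continuous π) (hopen : IsOpenMap π)
    (hsurj : Function.Surjective π)
    (k L : ℝ) (hk : 1 ≤ k) (hL : 1 ≤ L)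
    (τ : X → ℝ) (hτlip : ∀ x x' : X, |τ x - τ x'| ≤ k * dist x x')
    (ρ : X → X → ℝ) (hρ : ∀ x x' : X, dist x x' ≤ k * ρ x x')
    (Y' : Set Y) (φ : Y' → X) (hφsec : ∀ y : Y', π (φ y) = (y : Y))
    (hφlip : ∀ y₁ y₂ : Y',
      dist (φ y₁) (φ y₂) ≤ L * infDist (φ y₁) (π ⁻¹' {(y₂ : Y)}))
    (x₀ xb₀ : X) (hx₀ : x₀ ∈ Set.range φ) (hxb₀ : xb₀ ∈ Set.range φ)
    (φτ : Y → X) (hφτsec : ∀ y : Y, π (φτ y) = y)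
    (hφτrange : Set.range φτ ⊆ τ ⁻¹' {τ x₀}) :
    |τ xb₀ - τ x₀| ≤ L * k ^ 2 * ρ x₀ (φτ (π xb₀)) := by
  obtain ⟨y₁, hy₁⟩ := hx₀
  obtain ⟨y₂, hy₂⟩ := hxb₀
  have h1 : |τ xb₀ - τ x₀| ≤ k * dist xb₀ x₀ := hτlip _ _
  have hmem : φτ (π xb₀) ∈ π ⁻¹' {(y₂ : Y)} := by
    simp [Set.mem_preimage, hφτsec, ← hy₂, hφτsec (π (φ y₂)), hφsec]
  have h2 : dist x₀ xb₀ ≤ L * dist x₀ (φτ (π xb₀)) := by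
    calc dist x₀ xb₀ = dist (φ y₁) (φ y₂) := by rw [hy₁, hy₂]
      _ ≤ L * infDist (φ y₁) (π ⁻¹' {(y₂ : Y)}) := hφlip y₁ y₂
      _ ≤ L * dist (φ y₁) (φτ (π xb₀)) :=
          mul_le_mul_of_nonneg_left (infDist_le_dist_of_mem hmem) (by linarith)
      _ = L * dist x₀ (φτ (π xb₀)) := by rw [hy₁]
  have h3 : dist x₀ (φτ (π xb₀)) ≤ k * ρ x₀ (φτ (π xb₀)) := hρ _ _
  have hρnn : 0 ≤ ρ x₀ (φτ (π xb₀)) := by nlinarith [dist_nonneg (x := x₀) (y := φτ (π xb₀))]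
  calc |τ xb₀ - τ x₀| ≤ k * dist xb₀ x₀ := h1
    _ = k * dist x₀ xb₀ := by rw [dist_comm]
    _ ≤ k * (L * (k * ρ x₀ (φτ (π xb₀)))) :=
        mul_le_mul_of_nonneg_left
          (h2.trans (mul_le_mul_of_nonneg_left h3 (by linarith))) (by linarith)
    _ = L * k ^ 2 * ρ x₀ (φτ (π xb₀)) := by ring
end
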